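/- arXiv:1901.03020 — 6 statements merged into one kernel-verified Lean document; each statement's English description precedes it below -/
import Mathlib

section
/- Let μ₁, μ₂ > 0, Δ_OMA = 1/μ₁ + 1/μ₂ + (1/μ₁)/(1+μ₁/μ₂) + (1/μ₂)/(1+μ₂/μ₁), and Δ_NOMA(α) = (2/α)(1/μ₁ + 1/μ₂). Then Δ_NOMA(α) ≤ Δ_OMA if and only if α ≥ 2(μ₁+μ₂)²/((μ₁+μ₂)² + μ₁² + μ₂²). -/
theorem noma_vs_oma_threshold (μ₁ μ₂ α : ℝ) (h₁ : 0 < μ₁) (h₂ : 0 < μ₂) (hα : 0 < α) :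
    (2/α) * (1/μ₁ + 1/μ₂)
      ≤ 1/μ₁ + 1/μ₂ + (1/μ₁)/(1 + μ₁/μ₂) + (1/μ₂)/(1 + μ₂/μ₁)
    ↔ α ≥ 2 * (μ₁ + μ₂)^2 / ((μ₁ + μ₂)^2 + μ₁^2 + μ₂^2) := by
  have hsum : 0 < μ₁ + μ₂ := by linarith
  have e1 : (2/α) * (1/μ₁ + 1/μ₂) = 2*(μ₁+μ₂)/(α*(μ₁*μ₂)) := by
    field_simp; ring
  have e2 : 1/μ₁ + 1/μ₂ + (1/μ₁)/(1 + μ₁/μ₂) + (1/μ₂)/(1 + μ₂/μ₁)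
      = ((μ₁+μ₂)^2 + μ₁^2 + μ₂^2)/(μ₁*μ₂*(μ₁+μ₂)) := by
    have h3 : (1:ℝ) + μ₁/μ₂ = (μ₂+μ₁)/μ₂ := by field_simp
    have h4 : (1:ℝ) + μ₂/μ₁ = (μ₁+μ₂)/μ₁ := by field_simp
    rw [h3, h4]
    field_simp
    ring
  rw [e1, e2, div_le_div_iff₀ (by positivity) (by positivity), ge_iff_le,
    div_le_iff₀ (by positivity)]
  constructor <;> intro h <;> nlinarith [mul_pos h₁ h₂, sq_nonneg (μ₁+μ₂), mul_pos (mul_pos h₁ h₂) hsum]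
end

section
/- For all μ₁, μ₂ > 0, the critical spectral efficiency factor α* = 2(μ₁+μ₂)²/((μ₁+μ₂)² + μ₁² + μ₂²) satisfies 1 < α* ≤ 4/3, with equality α* = 4/3 if and only if μ₁ = μ₂. -/
/-!
With `D = (μ₁ + μ₂)² + μ₁² + μ₂²`, the critical factor satisfies the two identities
`α* - 1 = 2 μ₁ μ₂ / D` and `4/3 - α* = 2 (μ₁ - μ₂)² / (3 D)`,
from which all three claims can be read off.
-/

noncomputable def criticalAlpha (μ₁ μ₂ : ℝ) : ℝ :=
  2 * (μ₁ + μ₂)^2 / ((μ₁ + μ₂)^2 + μ₁^2 + μ₂^2)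

section

variable {μ₁ μ₂ : ℝ}

lemma criticalAlpha_denom_pos (h : μ₁ ≠ 0) : 0 < (μ₁ + μ₂)^2 + μ₁^2 + μ₂^2 := by
  have : 0 < μ₁^2 := by positivity
  positivity

lemma criticalAlpha_sub_one (h : μ₁ ≠ 0) :
    criticalAlpha μ₁ μ₂ - 1 = 2 * μ₁ * μ₂ / ((μ₁ + μ₂)^2 + μ₁^2 + μ₂^2) := by
  have hD := (criticalAlpha_denom_pos (μ₂ := μ₂) h).ne'
  unfold criticalAlpha
  field_simp
  ring

lemma four_thirds_sub_criticalAlpha (h : μ₁ ≠ 0) :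
    4/3 - criticalAlpha μ₁ μ₂ = 2 * (μ₁ - μ₂)^2 / (3 * ((μ₁ + μ₂)^2 + μ₁^2 + μ₂^2)) := by
  have hD := (criticalAlpha_denom_pos (μ₂ := μ₂) h).ne'
  unfold criticalAlpha
  field_simp
  ring

lemma one_lt_criticalAlpha (h₁ : 0 < μ₁) (h₂ : 0 < μ₂) : 1 < criticalAlpha μ₁ μ₂ := by
  have hD := criticalAlpha_denom_pos (μ₂ := μ₂) h₁.ne'
  have : 0 < criticalAlpha μ₁ μ₂ - 1 := by
    rw [criticalAlpha_sub_one h₁.ne']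
    positivity
  linarith

lemma criticalAlpha_le_four_thirds (h : μ₁ ≠ 0) : criticalAlpha μ₁ μ₂ ≤ 4/3 := by
  have hD := criticalAlpha_denom_pos (μ₂ := μ₂) h
  have : 0 ≤ 4/3 - criticalAlpha μ₁ μ₂ := by
    rw [four_thirds_sub_criticalAlpha h]
    positivity
  linarith

lemma criticalAlpha_eq_four_thirds_iff (h : μ₁ ≠ 0) : criticalAlpha μ₁ μ₂ = 4/3 ↔ μ₁ = μ₂ := by
  have hD := (criticalAlpha_denom_pos (μ₂ := μ₂) h).ne'
  rw [eq_comm, ← sub_eq_zero, four_thirds_sub_criticalAlpha h, ← sub_eq_zero (a := μ₁)]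
  simp [hD]

end

theorem critical_alpha_bounds (μ₁ μ₂ : ℝ) (h₁ : 0 < μ₁) (h₂ : 0 < μ₂) :
    1 < 2 * (μ₁ + μ₂)^2 / ((μ₁ + μ₂)^2 + μ₁^2 + μ₂^2) ∧
    2 * (μ₁ + μ₂)^2 / ((μ₁ + μ₂)^2 + μ₁^2 + μ₂^2) ≤ 4/3 ∧
    (2 * (μ₁ + μ₂)^2 / ((μ₁ + μ₂)^2 + μ₁^2 + μ₂^2) = 4/3 ↔ μ₁ = μ₂) :=
  ⟨one_lt_criticalAlpha h₁ h₂, criticalAlpha_le_four_thirds h₁.ne',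
    criticalAlpha_eq_four_thirds_iff h₁.ne'⟩
end

section
/- Let λ₁, λ₂, μ₁, μ₂, μ'₁, μ'₂ > 0. The 4×4 matrix A₁ with rows (λ₁+λ₂, −μ₁, 0, −μ₂), (−λ₂, 0, −μ'₁, λ₁+μ₂), (0, −λ₂, μ'₁+μ'₂, −λ₁), (1, 1, 1, 1) is invertible, so the linear system A₁ π̄ = (0,0,0,1)ᵀ has a unique solution π̄ ∈ ℝ⁴. -/
/-!
The determinant of `A₁` is minus a polynomial in the rates with positive coefficients (one
monomial per rooted spanning tree of the transition graph, as in the Markov chain tree theorem), so it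
is nonzero when all rates are positive. An invertible square matrix defines a bijection by
`mulVec`, which gives the unique solution.
-/

namespace Matrix

theorem existsUnique_mulVec_eq_of_isUnit {n R : Type*} [Fintype n] [DecidableEq n] [CommRing R]
    {A : Matrix n n R} (hA : IsUnit A) (b : n → R) : ∃! x, A *ᵥ x = b :=
  Function.Bijective.existsUnique
    ⟨mulVec_injective_of_isUnit hA, mulVec_surjective_iff_isUnit.mpr hA⟩ b

end Matrix

namespace NOMA

def balanceMatrix (l₁ l₂ μ₁ μ₂ μ'₁ μ'₂ : ℝ) : Matrix (Fin 4) (Fin 4) ℝ :=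
  !![l₁+l₂, -μ₁, 0, -μ₂;
     -l₂, 0, -μ'₁, l₁+μ₂;
     0, -l₂, μ'₁+μ'₂, -l₁;
     1, 1, 1, 1]

theorem det_balanceMatrix (l₁ l₂ μ₁ μ₂ μ'₁ μ'₂ : ℝ) :
    (balanceMatrix l₁ l₂ μ₁ μ₂ μ'₁ μ'₂).det =
      -(μ₁*μ₂*μ'₂ + μ₁*μ₂*μ'₁ + l₂*μ₂*μ'₁ + l₂*μ₁*μ'₂ + l₂*μ₁*μ'₁ + l₂^2*μ'₁
        + l₁*μ₂*μ'₂ + l₁*μ₂*μ'₁ + l₁*μ₁*μ'₂ + l₁*l₂*μ'₂ + l₁*l₂*μ'₁ + l₁*l₂*μ₂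
        + l₁*l₂*μ₁ + l₁*l₂^2 + l₁^2*μ'₂ + l₁^2*l₂) := by
  rw [balanceMatrix, Matrix.det_succ_row_zero, Fin.sum_univ_four]
  simp only [Fin.isValue, Fin.coe_ofNat_eq_mod, Matrix.of_apply, Matrix.cons_val',
    Matrix.cons_val, Matrix.cons_val_fin_one, Matrix.det_fin_three, Matrix.submatrix_apply,
    Fin.succAbove, Fin.reduceSucc, Fin.reduceCastSucc, Fin.reduceLT, ↓reduceIte]
  ring

theorem det_balanceMatrix_neg {l₁ l₂ μ₁ μ₂ μ'₁ μ'₂ : ℝ} (hl₁ : 0 < l₁) (hl₂ : 0 < l₂)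
    (hμ₁ : 0 < μ₁) (hμ₂ : 0 < μ₂) (hμ'₁ : 0 < μ'₁) (hμ'₂ : 0 < μ'₂) :
    (balanceMatrix l₁ l₂ μ₁ μ₂ μ'₁ μ'₂).det < 0 := by
  rw [det_balanceMatrix, neg_neg_iff_pos]
  positivity

theorem isUnit_balanceMatrix {l₁ l₂ μ₁ μ₂ μ'₁ μ'₂ : ℝ} (hl₁ : 0 < l₁) (hl₂ : 0 < l₂)
    (hμ₁ : 0 < μ₁) (hμ₂ : 0 < μ₂) (hμ'₁ : 0 < μ'₁) (hμ'₂ : 0 < μ'₂) :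
    IsUnit (balanceMatrix l₁ l₂ μ₁ μ₂ μ'₁ μ'₂) :=
  (Matrix.isUnit_iff_isUnit_det _).mpr
    (det_balanceMatrix_neg hl₁ hl₂ hμ₁ hμ₂ hμ'₁ hμ'₂).ne.isUnit

end NOMA

theorem noma_balance_matrix_invertible (l₁ l₂ μ₁ μ₂ μ'₁ μ'₂ : ℝ)
    (hl₁ : 0 < l₁) (hl₂ : 0 < l₂) (hμ₁ : 0 < μ₁) (hμ₂ : 0 < μ₂)
    (hμ'₁ : 0 < μ'₁) (hμ'₂ : 0 < μ'₂) :
    IsUnit (!![l₁+l₂, -μ₁, 0, -μ₂;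
               -l₂, 0, -μ'₁, l₁+μ₂;
               0, -l₂, μ'₁+μ'₂, -l₁;
               1, 1, 1, 1] : Matrix (Fin 4) (Fin 4) ℝ) ∧
    ∃! π : Fin 4 → ℝ,
      (!![l₁+l₂, -μ₁, 0, -μ₂;
          -l₂, 0, -μ'₁, l₁+μ₂;
          0, -l₂, μ'₁+μ'₂, -l₁;
          1, 1, 1, 1] : Matrix (Fin 4) (Fin 4) ℝ).mulVec π = ![0, 0, 0, 1] := by
  have hA := NOMA.isUnit_balanceMatrix hl₁ hl₂ hμ₁ hμ₂ hμ'₁ hμ'₂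
  exact ⟨hA, Matrix.existsUnique_mulVec_eq_of_isUnit hA _⟩
end

section
/- Let λ₁, λ₂, μ₁, μ₂ > 0. The 5×5 matrix A₁ with rows (λ₁+λ₂, −μ₁, −μ₂, 0, 0), (−λ₁, μ₁+λ₂, 0, −μ₂, 0), (−λ₂, 0, λ₁+μ₂, 0, −μ₁), (0, 0, −λ₁, μ₂, 0), (1,1,1,1,1) is invertible, so A₁π̄ = (0,0,0,0,1)ᵀ has a unique solution π̄ ∈ ℝ⁵, and all components of π̄ are strictly positive. -/
set_option maxHeartbeats 1000000 in
theorem oma_balance_matrix_invertible (l₁ l₂ μ₁ μ₂ : ℝ)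
    (hl₁ : 0 < l₁) (hl₂ : 0 < l₂) (hμ₁ : 0 < μ₁) (hμ₂ : 0 < μ₂) :
    IsUnit (!![l₁+l₂, -μ₁, -μ₂, 0, 0;
               -l₁, μ₁+l₂, 0, -μ₂, 0;
               -l₂, 0, l₁+μ₂, 0, -μ₁;
               0, 0, -l₁, μ₂, 0;
               1, 1, 1, 1, 1] : Matrix (Fin 5) (Fin 5) ℝ) ∧
    (∃! π : Fin 5 → ℝ,
      (!![l₁+l₂, -μ₁, -μ₂, 0, 0;
          -l₁, μ₁+l₂, 0, -μ₂, 0;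
          -l₂, 0, l₁+μ₂, 0, -μ₁;
          0, 0, -l₁, μ₂, 0;
          1, 1, 1, 1, 1] : Matrix (Fin 5) (Fin 5) ℝ).mulVec π = ![0, 0, 0, 0, 1]) ∧
    (∀ π : Fin 5 → ℝ,
      (!![l₁+l₂, -μ₁, -μ₂, 0, 0;
          -l₁, μ₁+l₂, 0, -μ₂, 0;
          -l₂, 0, l₁+μ₂, 0, -μ₁;
          0, 0, -l₁, μ₂, 0;
          1, 1, 1, 1, 1] : Matrix (Fin 5) (Fin 5) ℝ).mulVec π = ![0, 0, 0, 0, 1] →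
      ∀ q, 0 < π q) := by
  have hD : (0:ℝ) < μ₁^2*μ₂^2 + l₂*μ₁*μ₂^2 + l₂*μ₁^2*μ₂ + l₂^2*μ₁*μ₂ + l₁*μ₁*μ₂^2 +
      l₁*μ₁^2*μ₂ + l₁*l₂*μ₂^2 + 2*l₁*l₂*μ₁*μ₂ + l₁*l₂*μ₁^2 + l₁*l₂^2*μ₂ +
      l₁*l₂^2*μ₁ + l₁^2*μ₁*μ₂ + l₁^2*l₂*μ₂ + l₁^2*l₂*μ₁ := by positivity
  set D : ℝ := μ₁^2*μ₂^2 + l₂*μ₁*μ₂^2 + l₂*μ₁^2*μ₂ + l₂^2*μ₁*μ₂ + l₁*μ₁*μ₂^2 +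
    l₁*μ₁^2*μ₂ + l₁*l₂*μ₂^2 + 2*l₁*l₂*μ₁*μ₂ + l₁*l₂*μ₁^2 + l₁*l₂^2*μ₂ +
    l₁*l₂^2*μ₁ + l₁^2*μ₁*μ₂ + l₁^2*l₂*μ₂ + l₁^2*l₂*μ₁ with hDdef
  have hdet : (!![l₁+l₂, -μ₁, -μ₂, 0, 0;
       -l₁, μ₁+l₂, 0, -μ₂, 0;
       -l₂, 0, l₁+μ₂, 0, -μ₁;
       0, 0, -l₁, μ₂, 0;
       1, 1, 1, 1, 1] : Matrix (Fin 5) (Fin 5) ℝ).det = D := by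
    rw [hDdef]
    simp [Matrix.det_succ_row_zero, Fin.sum_univ_succ, Fin.succAbove,
      Matrix.cons_val', Matrix.cons_val_zero, Matrix.cons_val_one, Matrix.head_cons]
    ring
  have hU : IsUnit (!![l₁+l₂, -μ₁, -μ₂, 0, 0;
       -l₁, μ₁+l₂, 0, -μ₂, 0;
       -l₂, 0, l₁+μ₂, 0, -μ₁;
       0, 0, -l₁, μ₂, 0;
       1, 1, 1, 1, 1] : Matrix (Fin 5) (Fin 5) ℝ) := by
    rw [Matrix.isUnit_iff_isUnit_det, hdet, isUnit_iff_ne_zero]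
    exact hD.ne'
  have hinj : Function.Injective
      (!![l₁+l₂, -μ₁, -μ₂, 0, 0;
       -l₁, μ₁+l₂, 0, -μ₂, 0;
       -l₂, 0, l₁+μ₂, 0, -μ₁;
       0, 0, -l₁, μ₂, 0;
       1, 1, 1, 1, 1] : Matrix (Fin 5) (Fin 5) ℝ).mulVec :=
    Matrix.mulVec_injective_iff_isUnit.mpr hU
  set π₀ : Fin 5 → ℝ := ![(μ₁^2*μ₂^2 + l₂*μ₁*μ₂^2 + l₁*μ₁^2*μ₂)/D,
    (l₁*μ₁*μ₂^2 + l₁*l₂*μ₁*μ₂ + l₁^2*μ₁*μ₂)/D,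
    (l₂*μ₁^2*μ₂ + l₂^2*μ₁*μ₂ + l₁*l₂*μ₁*μ₂)/D,
    (l₁*l₂*μ₁^2 + l₁*l₂^2*μ₁ + l₁^2*l₂*μ₁)/D,
    (l₁*l₂*μ₂^2 + l₁*l₂^2*μ₂ + l₁^2*l₂*μ₂)/D] with hπ₀
  have hD0 : D ≠ 0 := hD.ne'
  have hsol : (!![l₁+l₂, -μ₁, -μ₂, 0, 0;
       -l₁, μ₁+l₂, 0, -μ₂, 0;
       -l₂, 0, l₁+μ₂, 0, -μ₁;
       0, 0, -l₁, μ₂, 0;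
       1, 1, 1, 1, 1] : Matrix (Fin 5) (Fin 5) ℝ).mulVec π₀ = ![0, 0, 0, 0, 1] := by
    funext q
    fin_cases q <;>
      simp only [hπ₀, Matrix.mulVec, dotProduct, Fin.sum_univ_five, Matrix.cons_val',
        Matrix.cons_val_zero, Matrix.cons_val_one, Matrix.head_cons, Matrix.empty_val',
        Matrix.cons_val_fin_one, Matrix.head_fin_const, Matrix.cons_val_two, Matrix.cons_val_three,
        Matrix.cons_val_four, Matrix.tail_cons, Matrix.of_apply, Fin.isValue, Fin.reduceFinMk, Fin.zero_eta, Fin.mk_one] <;>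
      · field_simp
        first | ring1 | (rw [hDdef]; ring1)
  refine ⟨hU, ⟨π₀, hsol, fun π hπ => hinj (hπ.trans hsol.symm)⟩, fun π hπ q => ?_⟩
  have hπeq : π = π₀ := hinj (hπ.trans hsol.symm)
  subst hπeq
  fin_cases q <;>
    · simp only [hπ₀, Matrix.cons_val', Matrix.cons_val_zero, Matrix.cons_val_one,
        Matrix.head_cons, Matrix.empty_val', Matrix.cons_val_fin_one, Matrix.cons_val_two,
        Matrix.cons_val_three, Matrix.cons_val_four, Matrix.tail_cons]
      exact div_pos (by positivity) hD
end

section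
/- For any μ₁, μ₂ > 0, Δ_OMA = 1/μ₁ + 1/μ₂ + (1/μ₁)/(1+μ₁/μ₂) + (1/μ₂)/(1+μ₂/μ₁) satisfies 3/2 · (1/μ₁ + 1/μ₂) ≤ Δ_OMA < 2(1/μ₁ + 1/μ₂), with the lower bound attained iff μ₁ = μ₂. -/
/-! Writing `S = 1/μ₁ + 1/μ₂` and `E = omaExtraAge μ₁ μ₂` for the rest of the age, both bounds
come from exact identities:
`E - S/2 = (μ₁ - μ₂)² / (2μ₁μ₂(μ₁ + μ₂)) ≥ 0`, vanishing exactly when `μ₁ = μ₂`, and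
`S - E = 2/(μ₁ + μ₂) > 0`. -/

noncomputable def omaExtraAge (μ₁ μ₂ : ℝ) : ℝ := (1/μ₁)/(1 + μ₁/μ₂) + (1/μ₂)/(1 + μ₂/μ₁)

section ExtraAge

variable {a b : ℝ}

lemma omaExtraAge_eq (ha : 0 < a) (hb : 0 < b) :
    omaExtraAge a b = (a^2 + b^2) / (a * b * (a + b)) := by
  have hab : a + b ≠ 0 := by positivity
  unfold omaExtraAge
  field_simp
  ring

lemma omaExtraAge_sub_half (ha : 0 < a) (hb : 0 < b) :
    omaExtraAge a b - (1/a + 1/b) / 2 = (a - b)^2 / (2 * a * b * (a + b)) := by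
  have hab : a + b ≠ 0 := by positivity
  rw [omaExtraAge_eq ha hb]
  field_simp
  ring

lemma sub_omaExtraAge (ha : 0 < a) (hb : 0 < b) :
    1/a + 1/b - omaExtraAge a b = 2 / (a + b) := by
  have hab : a + b ≠ 0 := by positivity
  rw [omaExtraAge_eq ha hb]
  field_simp
  ring

lemma half_le_omaExtraAge (ha : 0 < a) (hb : 0 < b) :
    (1/a + 1/b) / 2 ≤ omaExtraAge a b := by
  have := omaExtraAge_sub_half ha hb
  have : 0 ≤ (a - b)^2 / (2 * a * b * (a + b)) := by positivity
  linarith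

lemma omaExtraAge_eq_half_iff (ha : 0 < a) (hb : 0 < b) :
    omaExtraAge a b = (1/a + 1/b) / 2 ↔ a = b := by
  have hden : 2 * a * b * (a + b) ≠ 0 := by positivity
  rw [← sub_eq_zero, omaExtraAge_sub_half ha hb, div_eq_zero_iff, or_iff_left hden,
    sq_eq_zero_iff, sub_eq_zero]

lemma omaExtraAge_lt (ha : 0 < a) (hb : 0 < b) : omaExtraAge a b < 1/a + 1/b := by
  have := sub_omaExtraAge ha hb
  have : 0 < 2 / (a + b) := by positivity
  linarith

end ExtraAge

theorem oma_age_bounds (μ₁ μ₂ : ℝ) (h₁ : 0 < μ₁) (h₂ : 0 < μ₂) :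
    (3/2 * (1/μ₁ + 1/μ₂) ≤ 1/μ₁ + 1/μ₂ + (1/μ₁)/(1 + μ₁/μ₂) + (1/μ₂)/(1 + μ₂/μ₁)) ∧
    (1/μ₁ + 1/μ₂ + (1/μ₁)/(1 + μ₁/μ₂) + (1/μ₂)/(1 + μ₂/μ₁) < 2 * (1/μ₁ + 1/μ₂)) ∧
    (3/2 * (1/μ₁ + 1/μ₂) = 1/μ₁ + 1/μ₂ + (1/μ₁)/(1 + μ₁/μ₂) + (1/μ₂)/(1 + μ₂/μ₁)
      ↔ μ₁ = μ₂) := by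
  have extra : (1/μ₁)/(1 + μ₁/μ₂) + (1/μ₂)/(1 + μ₂/μ₁) = omaExtraAge μ₁ μ₂ := rfl
  have lower := half_le_omaExtraAge h₁ h₂
  have upper := omaExtraAge_lt h₁ h₂
  refine ⟨by linarith, by linarith, ?_⟩
  rw [← omaExtraAge_eq_half_iff h₁ h₂]
  constructor <;> intro h <;> linarith
end

section
/- Let λ₁, λ₂, μ₁, μ₂ > 0. The 8×8 matrix A₂ of the OMA correlation-vector system given in the paper (with diagonal entries λ₁+λ₂, λ₂+μ₁, λ₁+λ₂+μ₁, λ₁+μ₂, μ₂, λ₁+μ₂, μ₁, λ₁+μ₁ and off-diagonal entries −μ₁, −μ₂, −λ₁, −λ₂ as specified) is invertible, so the vector v̄' of age-state correlations is uniquely determined by A₂ v̄' = c₂. -/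
set_option maxHeartbeats 1000000

private lemma vec8_five {α : Type*} (a0 a1 a2 a3 a4 a5 a6 a7 : α) :
    ![a0,a1,a2,a3,a4,a5,a6,a7] (5 : Fin 8) = a5 := rfl
private lemma vec8_six {α : Type*} (a0 a1 a2 a3 a4 a5 a6 a7 : α) :
    ![a0,a1,a2,a3,a4,a5,a6,a7] (6 : Fin 8) = a6 := rfl
private lemma vec8_seven {α : Type*} (a0 a1 a2 a3 a4 a5 a6 a7 : α) :
    ![a0,a1,a2,a3,a4,a5,a6,a7] (7 : Fin 8) = a7 := rfl

theorem oma_correlation_matrix_invertible (l₁ l₂ μ₁ μ₂ : ℝ)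
    (hl₁ : 0 < l₁) (hl₂ : 0 < l₂) (hμ₁ : 0 < μ₁) (hμ₂ : 0 < μ₂) :
    IsUnit (!![l₁+l₂, 0, -μ₁, -μ₂, 0, 0, 0, 0;
               -l₁, l₂+μ₁, 0, 0, -μ₂, 0, 0, 0;
               0, 0, l₁+l₂+μ₁, 0, 0, -μ₂, 0, 0;
               -l₂, 0, 0, l₁+μ₂, 0, 0, 0, -μ₁;
               0, 0, 0, -l₁, μ₂, 0, 0, 0;
               0, 0, 0, 0, 0, l₁+μ₂, 0, 0;
               0, -l₂, 0, 0, 0, 0, μ₁, 0;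
               0, 0, -l₂, 0, 0, 0, 0, l₁+μ₁] : Matrix (Fin 8) (Fin 8) ℝ) ∧
    ∀ c : Fin 8 → ℝ, ∃! v : Fin 8 → ℝ,
      (!![l₁+l₂, 0, -μ₁, -μ₂, 0, 0, 0, 0;
          -l₁, l₂+μ₁, 0, 0, -μ₂, 0, 0, 0;
          0, 0, l₁+l₂+μ₁, 0, 0, -μ₂, 0, 0;
          -l₂, 0, 0, l₁+μ₂, 0, 0, 0, -μ₁;
          0, 0, 0, -l₁, μ₂, 0, 0, 0;
          0, 0, 0, 0, 0, l₁+μ₂, 0, 0;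
          0, -l₂, 0, 0, 0, 0, μ₁, 0;
          0, 0, -l₂, 0, 0, 0, 0, l₁+μ₁] : Matrix (Fin 8) (Fin 8) ℝ).mulVec v = c := by
  set M : Matrix (Fin 8) (Fin 8) ℝ :=
    !![l₁+l₂, 0, -μ₁, -μ₂, 0, 0, 0, 0;
       -l₁, l₂+μ₁, 0, 0, -μ₂, 0, 0, 0;
       0, 0, l₁+l₂+μ₁, 0, 0, -μ₂, 0, 0;
       -l₂, 0, 0, l₁+μ₂, 0, 0, 0, -μ₁;
       0, 0, 0, -l₁, μ₂, 0, 0, 0;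
       0, 0, 0, 0, 0, l₁+μ₂, 0, 0;
       0, -l₂, 0, 0, 0, 0, μ₁, 0;
       0, 0, -l₂, 0, 0, 0, 0, l₁+μ₁] with hM
  have hunit : IsUnit M := by
    rw [← Matrix.mulVec_injective_iff_isUnit]
    intro u w huw
    have hker : M.mulVec (u - w) = 0 := by
      rw [Matrix.mulVec_sub, huw, sub_self]
    set v : Fin 8 → ℝ := u - w with hv
    have e0 : (l₁+l₂)*v 0 - μ₁*v 2 - μ₂*v 3 = 0 := by
      have h : ∑ j : Fin 8, M 0 j * v j = 0 := by
        simpa [Matrix.mulVec, dotProduct] using congrFun hker 0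
      rw [Fin.sum_univ_eight] at h
      have c0 : M (0:Fin 8) (0:Fin 8) = l₁+l₂ := by rw [hM]; rfl
      have c1 : M (0:Fin 8) (1:Fin 8) = 0 := by rw [hM]; rfl
      have c2 : M (0:Fin 8) (2:Fin 8) = -μ₁ := by rw [hM]; rfl
      have c3 : M (0:Fin 8) (3:Fin 8) = -μ₂ := by rw [hM]; rfl
      have c4 : M (0:Fin 8) (4:Fin 8) = 0 := by rw [hM]; rfl
      have c5 : M (0:Fin 8) (5:Fin 8) = 0 := by rw [hM]; rfl
      have c6 : M (0:Fin 8) (6:Fin 8) = 0 := by rw [hM]; rfl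
      have c7 : M (0:Fin 8) (7:Fin 8) = 0 := by rw [hM]; rfl
      rw [c0, c1, c2, c3, c4, c5, c6, c7] at h
      linarith
    have e1 : -(l₁*v 0) + (l₂+μ₁)*v 1 - μ₂*v 4 = 0 := by
      have h : ∑ j : Fin 8, M 1 j * v j = 0 := by
        simpa [Matrix.mulVec, dotProduct] using congrFun hker 1
      rw [Fin.sum_univ_eight] at h
      have c0 : M (1:Fin 8) (0:Fin 8) = -l₁ := by rw [hM]; rfl
      have c1 : M (1:Fin 8) (1:Fin 8) = l₂+μ₁ := by rw [hM]; rfl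
      have c2 : M (1:Fin 8) (2:Fin 8) = 0 := by rw [hM]; rfl
      have c3 : M (1:Fin 8) (3:Fin 8) = 0 := by rw [hM]; rfl
      have c4 : M (1:Fin 8) (4:Fin 8) = -μ₂ := by rw [hM]; rfl
      have c5 : M (1:Fin 8) (5:Fin 8) = 0 := by rw [hM]; rfl
      have c6 : M (1:Fin 8) (6:Fin 8) = 0 := by rw [hM]; rfl
      have c7 : M (1:Fin 8) (7:Fin 8) = 0 := by rw [hM]; rfl
      rw [c0, c1, c2, c3, c4, c5, c6, c7] at h
      linarith
    have e2 : (l₁+l₂+μ₁)*v 2 - μ₂*v 5 = 0 := by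
      have h : ∑ j : Fin 8, M 2 j * v j = 0 := by
        simpa [Matrix.mulVec, dotProduct] using congrFun hker 2
      rw [Fin.sum_univ_eight] at h
      have c0 : M (2:Fin 8) (0:Fin 8) = 0 := by rw [hM]; rfl
      have c1 : M (2:Fin 8) (1:Fin 8) = 0 := by rw [hM]; rfl
      have c2 : M (2:Fin 8) (2:Fin 8) = l₁+l₂+μ₁ := by rw [hM]; rfl
      have c3 : M (2:Fin 8) (3:Fin 8) = 0 := by rw [hM]; rfl
      have c4 : M (2:Fin 8) (4:Fin 8) = 0 := by rw [hM]; rfl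
      have c5 : M (2:Fin 8) (5:Fin 8) = -μ₂ := by rw [hM]; rfl
      have c6 : M (2:Fin 8) (6:Fin 8) = 0 := by rw [hM]; rfl
      have c7 : M (2:Fin 8) (7:Fin 8) = 0 := by rw [hM]; rfl
      rw [c0, c1, c2, c3, c4, c5, c6, c7] at h
      linarith
    have e3 : -(l₂*v 0) + (l₁+μ₂)*v 3 - μ₁*v 7 = 0 := by
      have h : ∑ j : Fin 8, M 3 j * v j = 0 := by
        simpa [Matrix.mulVec, dotProduct] using congrFun hker 3
      rw [Fin.sum_univ_eight] at h
      have c0 : M (3:Fin 8) (0:Fin 8) = -l₂ := by rw [hM]; rfl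
      have c1 : M (3:Fin 8) (1:Fin 8) = 0 := by rw [hM]; rfl
      have c2 : M (3:Fin 8) (2:Fin 8) = 0 := by rw [hM]; rfl
      have c3 : M (3:Fin 8) (3:Fin 8) = l₁+μ₂ := by rw [hM]; rfl
      have c4 : M (3:Fin 8) (4:Fin 8) = 0 := by rw [hM]; rfl
      have c5 : M (3:Fin 8) (5:Fin 8) = 0 := by rw [hM]; rfl
      have c6 : M (3:Fin 8) (6:Fin 8) = 0 := by rw [hM]; rfl
      have c7 : M (3:Fin 8) (7:Fin 8) = -μ₁ := by rw [hM]; rfl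
      rw [c0, c1, c2, c3, c4, c5, c6, c7] at h
      linarith
    have e4 : -(l₁*v 3) + μ₂*v 4 = 0 := by
      have h : ∑ j : Fin 8, M 4 j * v j = 0 := by
        simpa [Matrix.mulVec, dotProduct] using congrFun hker 4
      rw [Fin.sum_univ_eight] at h
      have c0 : M (4:Fin 8) (0:Fin 8) = 0 := by rw [hM]; rfl
      have c1 : M (4:Fin 8) (1:Fin 8) = 0 := by rw [hM]; rfl
      have c2 : M (4:Fin 8) (2:Fin 8) = 0 := by rw [hM]; rfl
      have c3 : M (4:Fin 8) (3:Fin 8) = -l₁ := by rw [hM]; rfl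
      have c4 : M (4:Fin 8) (4:Fin 8) = μ₂ := by rw [hM]; rfl
      have c5 : M (4:Fin 8) (5:Fin 8) = 0 := by rw [hM]; rfl
      have c6 : M (4:Fin 8) (6:Fin 8) = 0 := by rw [hM]; rfl
      have c7 : M (4:Fin 8) (7:Fin 8) = 0 := by rw [hM]; rfl
      rw [c0, c1, c2, c3, c4, c5, c6, c7] at h
      linarith
    have e5 : (l₁+μ₂)*v 5 = 0 := by
      have h : ∑ j : Fin 8, M 5 j * v j = 0 := by
        simpa [Matrix.mulVec, dotProduct] using congrFun hker 5
      rw [Fin.sum_univ_eight] at h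
      have c0 : M (5:Fin 8) (0:Fin 8) = 0 := by rw [hM]; rfl
      have c1 : M (5:Fin 8) (1:Fin 8) = 0 := by rw [hM]; rfl
      have c2 : M (5:Fin 8) (2:Fin 8) = 0 := by rw [hM]; rfl
      have c3 : M (5:Fin 8) (3:Fin 8) = 0 := by rw [hM]; rfl
      have c4 : M (5:Fin 8) (4:Fin 8) = 0 := by rw [hM]; rfl
      have c5 : M (5:Fin 8) (5:Fin 8) = l₁+μ₂ := by rw [hM]; rfl
      have c6 : M (5:Fin 8) (6:Fin 8) = 0 := by rw [hM]; rfl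
      have c7 : M (5:Fin 8) (7:Fin 8) = 0 := by rw [hM]; rfl
      rw [c0, c1, c2, c3, c4, c5, c6, c7] at h
      linarith
    have e6 : -(l₂*v 1) + μ₁*v 6 = 0 := by
      have h : ∑ j : Fin 8, M 6 j * v j = 0 := by
        simpa [Matrix.mulVec, dotProduct] using congrFun hker 6
      rw [Fin.sum_univ_eight] at h
      have c0 : M (6:Fin 8) (0:Fin 8) = 0 := by rw [hM]; rfl
      have c1 : M (6:Fin 8) (1:Fin 8) = -l₂ := by rw [hM]; rfl
      have c2 : M (6:Fin 8) (2:Fin 8) = 0 := by rw [hM]; rfl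
      have c3 : M (6:Fin 8) (3:Fin 8) = 0 := by rw [hM]; rfl
      have c4 : M (6:Fin 8) (4:Fin 8) = 0 := by rw [hM]; rfl
      have c5 : M (6:Fin 8) (5:Fin 8) = 0 := by rw [hM]; rfl
      have c6 : M (6:Fin 8) (6:Fin 8) = μ₁ := by rw [hM]; rfl
      have c7 : M (6:Fin 8) (7:Fin 8) = 0 := by rw [hM]; rfl
      rw [c0, c1, c2, c3, c4, c5, c6, c7] at h
      linarith
    have e7 : -(l₂*v 2) + (l₁+μ₁)*v 7 = 0 := by
      have h : ∑ j : Fin 8, M 7 j * v j = 0 := by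
        simpa [Matrix.mulVec, dotProduct] using congrFun hker 7
      rw [Fin.sum_univ_eight] at h
      have c0 : M (7:Fin 8) (0:Fin 8) = 0 := by rw [hM]; rfl
      have c1 : M (7:Fin 8) (1:Fin 8) = 0 := by rw [hM]; rfl
      have c2 : M (7:Fin 8) (2:Fin 8) = -l₂ := by rw [hM]; rfl
      have c3 : M (7:Fin 8) (3:Fin 8) = 0 := by rw [hM]; rfl
      have c4 : M (7:Fin 8) (4:Fin 8) = 0 := by rw [hM]; rfl
      have c5 : M (7:Fin 8) (5:Fin 8) = 0 := by rw [hM]; rfl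
      have c6 : M (7:Fin 8) (6:Fin 8) = 0 := by rw [hM]; rfl
      have c7 : M (7:Fin 8) (7:Fin 8) = l₁+μ₁ := by rw [hM]; rfl
      rw [c0, c1, c2, c3, c4, c5, c6, c7] at h
      linarith
    have hv5 : v 5 = 0 := by
      rcases mul_eq_zero.mp e5 with h | h
      · linarith
      · exact h
    have hv2 : v 2 = 0 := by
      have : (l₁+l₂+μ₁)*v 2 = 0 := by rw [hv5] at e2; linarith
      rcases mul_eq_zero.mp this with h | h
      · linarith
      · exact h
    have hv7 : v 7 = 0 := by
      have : (l₁+μ₁)*v 7 = 0 := by rw [hv2] at e7; linarith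
      rcases mul_eq_zero.mp this with h | h
      · linarith
      · exact h
    have hv3 : v 3 = 0 := by
      have key : (l₁*(l₁+l₂+μ₂))*v 3 = 0 := by
        linear_combination (l₁+l₂)*e3 + l₂*e0 + l₂*μ₁*hv2 + (l₁+l₂)*μ₁*hv7
      rcases mul_eq_zero.mp key with h | h
      · nlinarith
      · exact h
    have hv0 : v 0 = 0 := by
      have : (l₁+l₂)*v 0 = 0 := by rw [hv2, hv3] at e0; linarith
      rcases mul_eq_zero.mp this with h | h
      · linarith
      · exact h
    have hv4 : v 4 = 0 := by
      have : μ₂*v 4 = 0 := by rw [hv3] at e4; linarith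
      rcases mul_eq_zero.mp this with h | h
      · linarith
      · exact h
    have hv1 : v 1 = 0 := by
      have : (l₂+μ₁)*v 1 = 0 := by rw [hv0, hv4] at e1; linarith
      rcases mul_eq_zero.mp this with h | h
      · linarith
      · exact h
    have hv6 : v 6 = 0 := by
      have : μ₁*v 6 = 0 := by rw [hv1] at e6; linarith
      rcases mul_eq_zero.mp this with h | h
      · linarith
      · exact h
    have hvz : v = 0 := by
      funext i
      fin_cases i <;>
        first
        | exact hv0 | exact hv1 | exact hv2 | exact hv3
        | exact hv4 | exact hv5 | exact hv6 | exact hv7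
    exact sub_eq_zero.mp hvz
  refine ⟨hunit, fun c => ?_⟩
  refine ⟨M⁻¹.mulVec c, ?_, fun y hy => ?_⟩
  · show M.mulVec (M⁻¹.mulVec c) = c
    rw [Matrix.mulVec_mulVec, Matrix.mul_nonsing_inv _ ((Matrix.isUnit_iff_isUnit_det M).mp hunit),
      Matrix.one_mulVec]
  · have := congrArg (M⁻¹.mulVec ·) hy
    simpa [Matrix.mulVec_mulVec,
      Matrix.nonsing_inv_mul _ ((Matrix.isUnit_iff_isUnit_det M).mp hunit),
      Matrix.one_mulVec] using this
end
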